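/- Let F₁, F₂ : S → ℂ and i : R → ℂ be arbitrary functions, and for k = 1, 2 define Θ_k : T → ℂ by Θ_k(τ) := ∑_{x ∈ S} Δ(τ, φ^x) F_k(x). Then ∑_{τ = (η, r) ∈ T} i(r) · |R|^{-1} · Θ₁(τ) · conj(Θ₂(τ)) = |S|^{-1} ∑_{x ∈ S} i(x_R) · F₁(x) · conj(F₂(x)). (This identity, for a coefficient function i that depends only on the R-component, is the fiberwise content of the stabilization Theorem 6.4 of the paper, converting the discrete spectral expansion over triplets τ into an expansion over pairs (φ, x).) -/

import Mathlib

section aux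
variable {G : Type*} [CommGroup G] [Finite G]

lemma char_finite : Finite (G →* ℂ) := by
  haveI : NeZero (Monoid.exponent G) := ⟨Monoid.exponent_ne_zero_of_finite⟩
  obtain ⟨e⟩ := CommGroup.monoidHom_mulEquiv_of_hasEnoughRootsOfUnity G ℂ
  have : Function.Injective (fun χ : G →* ℂ => e χ.toHomUnits) := by
    intro a b hab
    have := e.injective hab
    ext g
    exact congrArg (fun φ : G →* ℂˣ => (φ g : ℂ)) this
  exact Finite.of_injective _ this

lemma char_card : Nat.card (G →* ℂ) = Nat.card G := by
  haveI : NeZero (Monoid.exponent G) := ⟨Monoid.exponent_ne_zero_of_finite⟩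
  obtain ⟨e⟩ := CommGroup.monoidHom_mulEquiv_of_hasEnoughRootsOfUnity G ℂ
  have eq : (G →* ℂ) ≃ (G →* ℂˣ) :=
    { toFun := MonoidHom.toHomUnits
      invFun := fun φ => (Units.coeHom ℂ).comp φ
      left_inv := fun χ => by ext g; rfl
      right_inv := fun φ => by ext g; rfl }
  rw [Nat.card_congr eq, Nat.card_congr e.toEquiv]

lemma char_sq (hG : ∀ g : G, g * g = 1) (χ : G →* ℂ) (g : G) : χ g * χ g = 1 := by
  rw [← map_mul, hG, map_one]

lemma char_real (hG : ∀ g : G, g * g = 1) (χ : G →* ℂ) (g : G) : (starRingEnd ℂ) (χ g) = χ g := by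
  rcases mul_self_eq_one_iff.mp (char_sq hG χ g) with h | h <;> simp [h]

lemma char_orth (hG : ∀ g : G, g * g = 1) [DecidableEq G] [Fintype (G →* ℂ)] (g : G) :
    ∑ χ : G →* ℂ, χ g = if g = 1 then (Nat.card G : ℂ) else 0 := by
  classical
  split_ifs with h
  · subst h
    simp [← char_card (G := G), Nat.card_eq_fintype_card]
  · haveI : NeZero (Monoid.exponent G) := ⟨Monoid.exponent_ne_zero_of_finite⟩
    obtain ⟨φu, hφu⟩ := CommGroup.exists_apply_ne_one_of_hasEnoughRootsOfUnity G ℂ h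
    set φ : G →* ℂ := (Units.coeHom ℂ).comp φu with hφ
    have hφg : φ g ≠ 1 := fun hh => hφu (Units.ext hh)
    have hinv : Function.Involutive (fun χ : G →* ℂ => φ * χ) := by
      intro χ; ext a; simp [← mul_assoc, char_sq hG φ a]
    have := Fintype.sum_bijective _ hinv.bijective (fun χ : G →* ℂ => (φ * χ) g)
      (fun χ : G →* ℂ => χ g) (fun χ => rfl)
    simp only [MonoidHom.mul_apply] at this
    rw [← Finset.mul_sum] at this
    have h0 : (φ g - 1) * ∑ χ : G →* ℂ, χ g = 0 := by rw [sub_mul, this]; ring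
    rcases mul_eq_zero.mp h0 with h' | h'
    · exact absurd (by linear_combination h') hφg
    · exact h'

end aux

theorem stabilization_fiberwise
    {S : Type*} [CommGroup S] [Finite S]
    (h2 : ∀ x : S, x * x = 1)
    (S_M R : Subgroup S)
    (hsplit : Function.Bijective fun p : S_M × R => (p.1 : S) * (p.2 : S))
    (xM : S → S_M) (xR : S → R)
    (hfac : ∀ x : S, ((xM x : S) * (xR x : S)) = x)
    (F₁ F₂ : S → ℂ) (i : ↥R → ℂ)
    (Θ₁ Θ₂ : ((↥S_M →* ℂ) × ↥R) → ℂ)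
    (hΘ₁ : ∀ τ : (↥S_M →* ℂ) × ↥R,
      Θ₁ τ = ∑ᶠ x : S,
        ((Nat.card S : ℂ)⁻¹ * τ.1 (xM x) * (∑ᶠ χ : ↥R →* ℂ, χ τ.2 * χ (xR x))) * F₁ x)
    (hΘ₂ : ∀ τ : (↥S_M →* ℂ) × ↥R,
      Θ₂ τ = ∑ᶠ x : S,
        ((Nat.card S : ℂ)⁻¹ * τ.1 (xM x) * (∑ᶠ χ : ↥R →* ℂ, χ τ.2 * χ (xR x))) * F₂ x) :
    (∑ᶠ τ : (↥S_M →* ℂ) × ↥R,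
        i τ.2 * (Nat.card ↥R : ℂ)⁻¹ * Θ₁ τ * (starRingEnd ℂ) (Θ₂ τ))
      = (Nat.card S : ℂ)⁻¹ *
          ∑ᶠ x : S, i (xR x) * F₁ x * (starRingEnd ℂ) (F₂ x) := by
  classical
  letI : Fintype S := Fintype.ofFinite S
  haveI : Finite (↥S_M →* ℂ) := char_finite
  haveI : Finite (↥R →* ℂ) := char_finite
  letI : Fintype (↥S_M →* ℂ) := Fintype.ofFinite _
  letI : Fintype (↥R →* ℂ) := Fintype.ofFinite _
  letI : Fintype ↥R := Fintype.ofFinite _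
  letI : Fintype ↥S_M := Fintype.ofFinite _
  have h2M : ∀ g : ↥S_M, g * g = 1 := fun g => Subtype.ext (h2 _)
  have h2R : ∀ g : ↥R, g * g = 1 := fun g => Subtype.ext (h2 _)
  set NS : ℂ := (Nat.card S : ℂ) with hNS
  set NR : ℂ := (Nat.card ↥R : ℂ) with hNR
  set NM : ℂ := (Nat.card ↥S_M : ℂ) with hNM
  -- orthogonality deltas
  have deltaR : ∀ r s : ↥R, (∑ χ : ↥R →* ℂ, χ r * χ s) = if r = s then NR else 0 := by
    intro r s
    simp_rw [← map_mul]
    rw [char_orth h2R]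
    have hc : r * s = 1 ↔ r = s := by
      rw [mul_eq_one_iff_eq_inv, inv_eq_of_mul_eq_one_right (h2R s)]
    simp only [hc, hNR]
  have deltaM : ∀ a b : ↥S_M, (∑ η : ↥S_M →* ℂ, η a * η b) = if a = b then NM else 0 := by
    intro a b
    simp_rw [← map_mul]
    rw [char_orth h2M]
    have hc : a * b = 1 ↔ a = b := by
      rw [mul_eq_one_iff_eq_inv, inv_eq_of_mul_eq_one_right (h2M b)]
    simp only [hc, hNM]
  -- Θ in Finset form with collapsed character kernel
  have hΘ₁' : ∀ τ : (↥S_M →* ℂ) × ↥R,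
      Θ₁ τ = ∑ x : S, (NS⁻¹ * τ.1 (xM x) * (if τ.2 = xR x then NR else 0)) * F₁ x := by
    intro τ
    rw [hΘ₁ τ, finsum_eq_sum_of_fintype]
    refine Finset.sum_congr rfl fun x _ => ?_
    rw [finsum_eq_sum_of_fintype, deltaR]
  have hΘ₂' : ∀ τ : (↥S_M →* ℂ) × ↥R,
      Θ₂ τ = ∑ x : S, (NS⁻¹ * τ.1 (xM x) * (if τ.2 = xR x then NR else 0)) * F₂ x := by
    intro τ
    rw [hΘ₂ τ, finsum_eq_sum_of_fintype]
    refine Finset.sum_congr rfl fun x _ => ?_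
    rw [finsum_eq_sum_of_fintype, deltaR]
  -- conjugation is trivial on the real coefficients
  have hconj : ∀ (τ : (↥S_M →* ℂ) × ↥R) (y : S),
      (starRingEnd ℂ) ((NS⁻¹ * τ.1 (xM y) * (if τ.2 = xR y then NR else 0)) * F₂ y)
        = (NS⁻¹ * τ.1 (xM y) * (if τ.2 = xR y then NR else 0)) * (starRingEnd ℂ) (F₂ y) := by
    intro τ y
    rw [map_mul, map_mul, map_mul]
    rw [char_real h2M]
    congr 2
    · rw [hNS, map_inv₀, map_natCast]
    · rw [apply_ite (starRingEnd ℂ), map_zero, hNR, map_natCast]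
  -- per-τ expansion into a double sum
  have expand : ∀ τ : (↥S_M →* ℂ) × ↥R,
      i τ.2 * NR⁻¹ * Θ₁ τ * (starRingEnd ℂ) (Θ₂ τ)
      = ∑ x : S, ∑ y : S,
          i τ.2 * NR⁻¹ * NS⁻¹ * NS⁻¹ * τ.1 (xM x) * τ.1 (xM y)
            * (if τ.2 = xR x then NR else 0) * (if τ.2 = xR y then NR else 0)
            * F₁ x * (starRingEnd ℂ) (F₂ y) := by
    intro τ
    rw [hΘ₁' τ, hΘ₂' τ, map_sum]
    simp_rw [hconj τ]
    simp only [Finset.mul_sum, Finset.sum_mul]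
    rw [Finset.sum_comm]
    refine Finset.sum_congr rfl fun x _ => Finset.sum_congr rfl fun y _ => by ring
  -- factorisation of x = xM x * xR x is unique
  have hxy : ∀ x y : S, (xM x = xM y ∧ xR x = xR y) ↔ x = y := by
    intro x y
    constructor
    · rintro ⟨hm, hr⟩
      rw [← hfac x, hm, hr, hfac y]
    · rintro rfl; exact ⟨rfl, rfl⟩
  have hNR0 : NR ≠ 0 := by
    rw [hNR]
    exact_mod_cast Nat.card_pos.ne'
  -- inner τ-sum for fixed x, y
  have innerτ : ∀ x y : S,
      (∑ τ : (↥S_M →* ℂ) × ↥R,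
          i τ.2 * NR⁻¹ * NS⁻¹ * NS⁻¹ * τ.1 (xM x) * τ.1 (xM y)
            * (if τ.2 = xR x then NR else 0) * (if τ.2 = xR y then NR else 0)
            * F₁ x * (starRingEnd ℂ) (F₂ y))
      = if y = x then NM * NR * NS⁻¹ * NS⁻¹ * (i (xR x) * F₁ x * (starRingEnd ℂ) (F₂ x)) else 0 := by
    intro x y
    rw [Fintype.sum_prod_type_right]
    -- collapse the r-sum using the deltas
    have step1 : ∀ r : ↥R,
        (∑ η : ↥S_M →* ℂ,
          i r * NR⁻¹ * NS⁻¹ * NS⁻¹ * η (xM x) * η (xM y)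
            * (if r = xR x then NR else 0) * (if r = xR y then NR else 0)
            * F₁ x * (starRingEnd ℂ) (F₂ y))
        = (if r = xR x then NR else 0) * (if r = xR y then NR else 0)
            * (i r * NR⁻¹ * NS⁻¹ * NS⁻¹ * F₁ x * (starRingEnd ℂ) (F₂ y))
            * (if xM x = xM y then NM else 0) := by
      intro r
      rw [← deltaM (xM x) (xM y), Finset.mul_sum]
      refine Finset.sum_congr rfl fun η _ => by ring
    simp_rw [step1]
    rcases eq_or_ne y x with rfl | hne
    · simp only [eq_self_iff_true, if_true]
      rw [Finset.sum_eq_single (xR y)]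
      · rw [if_pos rfl]
        linear_combination (NR * i (xR y) * F₁ y * (starRingEnd ℂ) (F₂ y) * NM * NS⁻¹ ^ 2) *
          mul_inv_cancel₀ hNR0
      · intro r _ hr; rw [if_neg hr]; ring
      · intro h; exact absurd (Finset.mem_univ _) h
    · rw [if_neg hne]
      have hne' : ¬(xM x = xM y ∧ xR x = xR y) := fun hc => hne ((hxy x y).mp hc).symm
      rcases not_and_or.mp hne' with hm | hr
      · refine Finset.sum_eq_zero fun r _ => ?_
        rw [if_neg hm]; ring
      · refine Finset.sum_eq_zero fun r _ => ?_
        by_cases hrx : r = xR x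
        · have hry : r ≠ xR y := fun h => hr (hrx.symm.trans h)
          rw [if_neg hry]; ring
        · rw [if_neg hrx]; ring
  -- cardinalities
  have hcard : NM * NR = NS := by
    rw [hNM, hNR, hNS, ← Nat.cast_mul]
    congr 1
    rw [← Nat.card_prod]
    exact Nat.card_eq_of_bijective _ hsplit
  have hNS0 : NS ≠ 0 := by
    rw [hNS]
    exact_mod_cast Nat.card_pos.ne'
  -- assemble
  rw [finsum_eq_sum_of_fintype, finsum_eq_sum_of_fintype]
  calc
    (∑ τ : (↥S_M →* ℂ) × ↥R, i τ.2 * NR⁻¹ * Θ₁ τ * (starRingEnd ℂ) (Θ₂ τ))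
        = ∑ τ : (↥S_M →* ℂ) × ↥R, ∑ x : S, ∑ y : S,
            i τ.2 * NR⁻¹ * NS⁻¹ * NS⁻¹ * τ.1 (xM x) * τ.1 (xM y)
              * (if τ.2 = xR x then NR else 0) * (if τ.2 = xR y then NR else 0)
              * F₁ x * (starRingEnd ℂ) (F₂ y) :=
      Finset.sum_congr rfl fun τ _ => expand τ
    _ = ∑ x : S, ∑ τ : (↥S_M →* ℂ) × ↥R, ∑ y : S,
            i τ.2 * NR⁻¹ * NS⁻¹ * NS⁻¹ * τ.1 (xM x) * τ.1 (xM y)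
              * (if τ.2 = xR x then NR else 0) * (if τ.2 = xR y then NR else 0)
              * F₁ x * (starRingEnd ℂ) (F₂ y) := Finset.sum_comm
    _ = ∑ x : S, ∑ y : S, ∑ τ : (↥S_M →* ℂ) × ↥R,
            i τ.2 * NR⁻¹ * NS⁻¹ * NS⁻¹ * τ.1 (xM x) * τ.1 (xM y)
              * (if τ.2 = xR x then NR else 0) * (if τ.2 = xR y then NR else 0)
              * F₁ x * (starRingEnd ℂ) (F₂ y) :=
      Finset.sum_congr rfl fun x _ => Finset.sum_comm
    _ = ∑ x : S, ∑ y : S,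
            (if y = x then NM * NR * NS⁻¹ * NS⁻¹
              * (i (xR x) * F₁ x * (starRingEnd ℂ) (F₂ x)) else 0) :=
      Finset.sum_congr rfl fun x _ => Finset.sum_congr rfl fun y _ => innerτ x y
    _ = ∑ x : S, NM * NR * NS⁻¹ * NS⁻¹ * (i (xR x) * F₁ x * (starRingEnd ℂ) (F₂ x)) := by
      refine Finset.sum_congr rfl fun x _ => ?_
      simp
    _ = NS⁻¹ * ∑ x : S, i (xR x) * F₁ x * (starRingEnd ℂ) (F₂ x) := by
      rw [Finset.mul_sum]
      refine Finset.sum_congr rfl fun x _ => ?_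
      rw [hcard, mul_inv_cancel₀ hNS0, one_mul]
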